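/- Let p be a prime and let (R, μ) be a nonzero commutative ring with pR = 0 and a negative pseudovaluation μ. Let A be a nonzero R-algebra which is free of finite rank as an R-module, and let τ be an admissible pseudovaluation on the finitely generated R-algebra A. Then a Witt vector r ∈ W(R) is overconvergent with respect to μ if and only if its image in W(A) under the map induced by the structure homomorphism R → A is overconvergent with respect to τ. -/

import Mathlib

open scoped Classical

noncomputable section

/-- A pseudovaluation on a commutative ring `A`: a function `ν : A → ℝ ∪ {±∞}` with
`ν 0 = ∞`, `ν 1 = 0`, `ν (a - b) ≥ min (ν a) (ν b)`, and `ν (a*b) ≥ ν a + ν b`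
whenever `ν a ≠ -∞` and `ν b ≠ -∞`. -/
structure IsPseudovaluation {A : Type*} [CommRing A] (ν : A → EReal) : Prop where
  map_zero : ν 0 = ⊤
  map_one : ν 1 = 0
  min_le_sub : ∀ a b : A, min (ν a) (ν b) ≤ ν (a - b)
  add_le_mul : ∀ a b : A, ν a ≠ ⊥ → ν b ≠ ⊥ → ν a + ν b ≤ ν (a * b)

/-- A proper pseudovaluation never takes the value `-∞`. -/
def IsProperPV {A : Type*} [CommRing A] (ν : A → EReal) : Prop :=
  IsPseudovaluation ν ∧ ∀ a : A, ν a ≠ ⊥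

/-- A negative pseudovaluation is proper and satisfies `ν a ≤ 0` for `a ≠ 0`. -/
def IsNegativePV {A : Type*} [CommRing A] (ν : A → EReal) : Prop :=
  IsPseudovaluation ν ∧ (∀ a : A, ν a ≠ ⊥) ∧ ∀ a : A, a ≠ 0 → ν a ≤ 0

/-- `f` is localizing with respect to `ν` if there are `C > 0`, `D ≥ 0` with
`ν (fⁿ x) ≤ C · ν x + n D` for all `n` and `x`. -/
def IsLocalizing {A : Type*} [CommRing A] (ν : A → EReal) (f : A) : Prop :=
  ∃ C D : ℝ, 0 < C ∧ 0 ≤ D ∧ ∀ (n : ℕ) (x : A),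
    ν (f ^ n * x) ≤ (C : EReal) * ν x + (((n : ℝ) * D : ℝ) : EReal)

/-- Two functions `A → ℝ ∪ {±∞}` are linearly equivalent if they dominate each other
up to positive multiplicative and nonnegative additive constants. -/
def LinearlyEquivalent {A : Type*} (ν₁ ν₂ : A → EReal) : Prop :=
  ∃ c₁ c₂ d₁ d₂ : ℝ, 0 < c₁ ∧ 0 < c₂ ∧ 0 ≤ d₁ ∧ 0 ≤ d₂ ∧
    (∀ a : A, (c₂ : EReal) * ν₂ a - (d₂ : EReal) ≤ ν₁ a) ∧
    (∀ a : A, (c₁ : EReal) * ν₁ a - (d₁ : EReal) ≤ ν₂ a)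

/-- The weighted degree pseudovaluation on a multivariate polynomial ring:
`ν (Σ_k c_k T^k) = inf_k { μ(c_k) - Σ_i k_i d_i }`. -/
def weightedDegPV {R : Type*} [CommRing R] (μ : R → EReal) {m : ℕ} (d : Fin m → ℝ)
    (f : MvPolynomial (Fin m) R) : EReal :=
  ⨅ k : Fin m →₀ ℕ, (μ (MvPolynomial.coeff k f) - ((∑ i, (k i : ℝ) * d i : ℝ) : EReal))

/-- A pseudovaluation `τ` on an `R`-algebra `B` is admissible (relative to `μ` on `R`)
if it is the quotient of a weighted degree pseudovaluation under some surjection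
from a polynomial ring. -/
def IsAdmissiblePV {R B : Type*} [CommRing R] [CommRing B] [Algebra R B]
    (μ : R → EReal) (τ : B → EReal) : Prop :=
  ∃ (m : ℕ) (π : MvPolynomial (Fin m) R →ₐ[R] B) (d : Fin m → ℝ),
    Function.Surjective π ∧ (∀ i, 0 < d i) ∧
    ∀ b : B, τ b = ⨆ (f : MvPolynomial (Fin m) R) (_ : π f = b), weightedDegPV μ d f

/-- The pseudovaluation `μ (Σ_i a_i X^i) = min_i { ν(a_i) - i·d }` on `A[X]`. -/
def polyPV {A : Type*} [CommRing A] (ν : A → EReal) (d : ℝ) (g : Polynomial A) : EReal :=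
  ⨅ i : ℕ, (ν (g.coeff i) - (((i : ℝ) * d : ℝ) : EReal))

/-- The induced pseudovaluation on the localization `A_f`: the quotient of `polyPV ν d`
under the map `A[X] → A_f`, `X ↦ f⁻¹`. -/
def locPV {A : Type*} [CommRing A] (ν : A → EReal) (f : A) (d : ℝ)
    (z : Localization.Away f) : EReal :=
  ⨆ (g : Polynomial A)
    (_ : Polynomial.aeval (IsLocalization.Away.invSelf (S := Localization.Away f) f) g = z),
    polyPV ν d g

/-- The Gauss norm `γ_ε(α) = inf_i { i + ε p^{-i} ν(a_i) }` of a Witt vector. -/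
def gaussNorm (p : ℕ) {A : Type*} [CommRing A] (ν : A → EReal) (ε : ℝ)
    (α : WittVector p A) : EReal :=
  ⨅ i : ℕ, ((i : EReal) + ((ε * (p : ℝ) ^ (-(i : ℤ)) : ℝ) : EReal) * ν (α.coeff i))

/-- A Witt vector is overconvergent if `γ_ε(α) ≠ -∞` for some `ε > 0`. -/
def IsOverconvergent (p : ℕ) {A : Type*} [CommRing A] (ν : A → EReal)
    (α : WittVector p A) : Prop :=
  ∃ ε : ℝ, 0 < ε ∧ gaussNorm p ν ε α ≠ ⊥

/-- The trivial valuation on an integral domain: `ν 0 = ∞` and `ν a = 0` for `a ≠ 0`. -/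
def trivialPV (K : Type*) [Zero K] : K → EReal :=
  fun a => if a = 0 then (⊤ : EReal) else 0

/-!
Gauss norms are compared termwise, so it suffices that `μ` and `τ ∘ algebraMap R A` are linearly
equivalent. The constant polynomial `C a` gives `μ a ≤ τ (a • 1)`. Conversely, fix an `R`-basis
of `A`. Lower bounds for the `μ`-values of coordinates add under multiplication, up to a constant
coming from the structure constants, so the coordinates of `π (T^k)` have `μ`-value at least
`e + K |k|`. Since `A` is faithfully flat, the coordinates of `1` form a unimodular row, which
bounds `μ a` below by the coordinates of `a • 1`. Hence every preimage `P` of `a • 1` has a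
coefficient with `μ (c_k) + V + K |k| ≤ μ a`, and the penalty `δ |k|` of the weighted degree
absorbs the `K |k|` term, so `τ (a • 1) ≤ C μ a + G` with `C > 0`.
-/

open MvPolynomial

namespace IsPseudovaluation

variable {A : Type*} [CommRing A] {ν : A → EReal}

theorem le_neg (hν : IsPseudovaluation ν) (a : A) : ν a ≤ ν (-a) := by
  simpa [hν.map_zero] using hν.min_le_sub 0 a

theorem min_le_add (hν : IsPseudovaluation ν) (a b : A) : min (ν a) (ν b) ≤ ν (a + b) := by
  simpa using (min_le_min_left _ (hν.le_neg b)).trans (hν.min_le_sub a (-b))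

theorem le_sum (hν : IsPseudovaluation ν) {β : Type*} {s : Finset β} {x : β → A} {c : EReal}
    (h : ∀ i ∈ s, c ≤ ν (x i)) : c ≤ ν (∑ i ∈ s, x i) := by
  classical
  induction s using Finset.induction with
  | empty => simp [hν.map_zero]
  | insert j s hj ih =>
    rw [Finset.sum_insert hj]
    have hs := ih fun i hi => h i (Finset.mem_insert_of_mem hi)
    exact (le_min (h j (s.mem_insert_self j)) hs).trans (hν.min_le_add _ _)

end IsPseudovaluation

section

variable {A : Type*} [CommRing A] {ν : A → EReal}

theorem IsNegativePV.isProperPV (hν : IsNegativePV ν) : IsProperPV ν :=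
  ⟨hν.1, hν.2.1⟩

theorem IsNegativePV.exists_eq_coe (hν : IsNegativePV ν) {a : A} (ha : a ≠ 0) :
    ∃ x : ℝ, ν a = x ∧ x ≤ 0 :=
  ⟨(ν a).toReal, (EReal.coe_toReal (ne_top_of_le_ne_top EReal.zero_ne_top (hν.2.2 a ha))
    (hν.2.1 a)).symm, EReal.toReal_nonpos (hν.2.2 a ha)⟩

theorem IsProperPV.add_le_mul (hν : IsProperPV ν) (a b : A) : ν a + ν b ≤ ν (a * b) :=
  hν.1.add_le_mul a b (hν.2 a) (hν.2 b)

end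

theorem exists_coe_le_of_forall_ne_bot {ι : Type*} [Finite ι] {v : ι → EReal}
    (hv : ∀ i, v i ≠ ⊥) : ∃ c : ℝ, c ≤ 0 ∧ ∀ i, (c : EReal) ≤ v i := by
  choose r hr using fun i => EReal.exists_between_coe_real (bot_lt_iff_ne_bot.2 (hv i))
  obtain ⟨M, hM⟩ := Finite.exists_ge r
  exact ⟨min M 0, min_le_right _ _, fun i =>
    (EReal.coe_le_coe_iff.2 ((min_le_left _ _).trans (hM i))).trans (hr i).2.le⟩

/-- `A` is faithfully flat over `R`, so the ideal generated by the coordinates of `1`, which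
extends to the unit ideal of `A`, is already the unit ideal of `R`. -/
theorem Module.Basis.exists_sum_mul_repr_one_eq_one {R A ι : Type*} [CommRing R] [CommRing A]
    [Nontrivial A] [Algebra R A] [Fintype ι] (b : Module.Basis ι R A) :
    ∃ u : ι → R, ∑ i, u i * b.repr 1 i = 1 := by
  have := Module.Free.of_basis b
  set I := Ideal.span (Set.range (b.repr 1))
  have h1 : ∑ i, b.repr 1 i • b i ∈ I.map (algebraMap R A) :=
    Ideal.sum_mem _ fun i _ => by
      rw [Algebra.smul_def]
      exact Ideal.mul_mem_right _ _ (Ideal.mem_map_of_mem _ (Ideal.subset_span ⟨i, rfl⟩))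
  rw [b.sum_repr, ← Ideal.eq_top_iff_one] at h1
  have hI : I = ⊤ := by
    rw [← Ideal.comap_map_eq_self_of_faithfullyFlat (B := A) I, h1, Ideal.comap_top]
  exact Ideal.mem_span_range_iff_exists_fun.1 (hI ▸ Submodule.mem_top : (1 : R) ∈ I)

section FiniteFree

variable {R A ι : Type*} [CommRing R] [CommRing A] [Algebra R A]
  (b : Module.Basis ι R A) {μ : R → EReal}

theorem inf_coeff_add_le_repr {σ : Type*} (hμ : IsProperPV μ) (π : MvPolynomial σ R →ₐ[R] A)
    {bound : (σ →₀ ℕ) → ℝ}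
    (hbound : ∀ k i, (bound k : EReal) ≤ μ (b.repr (π (monomial k 1)) i))
    (P : MvPolynomial σ R) (i : ι) :
    P.support.inf (fun k => μ (P.coeff k) + bound k) ≤ μ (b.repr (π P) i) := by
  have hP : b.repr (π P) i = ∑ k ∈ P.support, P.coeff k * b.repr (π (monomial k 1)) i := by
    conv_lhs => rw [P.as_sum]
    simp only [map_sum, Finsupp.coe_finsetSum, Finset.sum_apply]
    refine Finset.sum_congr rfl fun k _ => ?_
    rw [show monomial k (P.coeff k) = P.coeff k • monomial k 1 by
        rw [smul_monomial, smul_eq_mul, mul_one],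
      map_smul, map_smul, Finsupp.smul_apply, smul_eq_mul]
  rw [hP]
  exact hμ.1.le_sum fun k hk =>
    (Finset.inf_le hk).trans ((add_le_add le_rfl (hbound k i)).trans (hμ.add_le_mul _ _))

variable [Fintype ι]

theorem le_of_le_repr_algebraMap (hμ : IsProperPV μ) {u : ι → R}
    (hu : ∑ i, u i * b.repr 1 i = 1) {c₀ : ℝ} (hu₀ : ∀ i, (c₀ : EReal) ≤ μ (u i)) {a : R}
    {c : EReal} (hc : ∀ i, c ≤ μ (b.repr (algebraMap R A a) i)) : c₀ + c ≤ μ a := by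
  have ha : a = ∑ i, u i * b.repr (algebraMap R A a) i := by
    simp only [Algebra.algebraMap_eq_smul_one, map_smul, Finsupp.smul_apply, smul_eq_mul]
    calc a = a * ∑ i, u i * b.repr 1 i := by rw [hu, mul_one]
      _ = _ := by rw [Finset.mul_sum]; exact Finset.sum_congr rfl fun i _ => by ring
  rw [ha]
  exact hμ.1.le_sum fun i _ => (add_le_add (hu₀ i) (hc i)).trans (hμ.add_le_mul _ _)

variable {m₀ : ℝ} (hm₀ : ∀ i j l, (m₀ : EReal) ≤ μ (b.repr (b i * b j) l))
include hm₀

theorem le_repr_mul (hμ : IsProperPV μ) {x y : A} {cx cy : ℝ}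
    (hx : ∀ i, (cx : EReal) ≤ μ (b.repr x i)) (hy : ∀ j, (cy : EReal) ≤ μ (b.repr y j))
    (l : ι) : ((cx + cy + m₀ : ℝ) : EReal) ≤ μ (b.repr (x * y) l) := by
  have hxy : b.repr (x * y) l =
      ∑ i, ∑ j, b.repr x i * (b.repr y j * b.repr (b i * b j) l) := by
    conv_lhs => rw [← b.sum_repr x, ← b.sum_repr y, Finset.sum_mul_sum]
    simp only [smul_mul_smul_comm, map_sum, map_smul, Finsupp.coe_finsetSum, Finset.sum_apply,
      Finsupp.smul_apply, smul_eq_mul, mul_assoc]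
  rw [hxy, EReal.coe_add, EReal.coe_add, add_assoc]
  exact hμ.1.le_sum fun i _ => hμ.1.le_sum fun j _ =>
    (add_le_add (hx i) ((add_le_add (hy j) (hm₀ i j l)).trans (hμ.add_le_mul _ _))).trans
      (hμ.add_le_mul _ _)

theorem le_repr_pow_mul (hμ : IsProperPV μ) {x y : A} {cx cy : ℝ}
    (hx : ∀ i, (cx : EReal) ≤ μ (b.repr x i)) (hy : ∀ j, (cy : EReal) ≤ μ (b.repr y j))
    (n : ℕ) (l : ι) : ((cy + n * (cx + m₀) : ℝ) : EReal) ≤ μ (b.repr (x ^ n * y) l) := by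
  induction n generalizing l with
  | zero => simpa using hy l
  | succ n ih =>
    rw [pow_succ', mul_assoc]
    refine le_of_eq_of_le ?_ (le_repr_mul b hm₀ hμ hx ih l)
    congr 1
    push_cast
    ring

theorem le_repr_map_monomial {σ : Type*} (hμ : IsProperPV μ) (π : MvPolynomial σ R →ₐ[R] A)
    {e f : ℝ} (he : ∀ i, (e : EReal) ≤ μ (b.repr 1 i))
    (hf : ∀ j i, (f : EReal) ≤ μ (b.repr (π (X j)) i)) (k : σ →₀ ℕ) (i : ι) :
    ((e + k.degree * (f + m₀) : ℝ) : EReal) ≤ μ (b.repr (π (monomial k 1)) i) := by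
  induction k using Finsupp.induction generalizing i with
  | zero => simpa using he i
  | single_add j n k _ _ ih =>
    rw [monomial_single_add, map_mul, map_pow]
    refine le_of_eq_of_le ?_ (le_repr_pow_mul b hm₀ hμ (hf j) ih n i)
    simp only [map_add, Finsupp.degree_single]
    congr 1
    push_cast
    ring

end FiniteFree

theorem exists_coeff_add_le_of_eq_algebraMap {R A σ : Type*} [CommRing R] [CommRing A]
    [Nontrivial A] [Algebra R A] [Module.Finite R A] [Module.Free R A] [Finite σ]
    {μ : R → EReal} (hμ : IsProperPV μ) (π : MvPolynomial σ R →ₐ[R] A) :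
    ∃ V K : ℝ, V ≤ 0 ∧ K ≤ 0 ∧ ∀ (a : R) (P : MvPolynomial σ R), P ≠ 0 →
      π P = algebraMap R A a →
        ∃ k ∈ P.support, μ (P.coeff k) + ((V + k.degree * K : ℝ) : EReal) ≤ μ a := by
  let b := Module.Free.chooseBasis R A
  obtain ⟨u, hu⟩ := b.exists_sum_mul_repr_one_eq_one
  obtain ⟨c₀, hc₀, hu₀⟩ := exists_coe_le_of_forall_ne_bot fun i => hμ.2 (u i)
  obtain ⟨e, he, hone⟩ := exists_coe_le_of_forall_ne_bot fun i => hμ.2 (b.repr 1 i)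
  obtain ⟨f, hf, hX⟩ := exists_coe_le_of_forall_ne_bot fun t : σ × _ =>
    hμ.2 (b.repr (π (X t.1)) t.2)
  obtain ⟨m₀, hm₀, hb⟩ := exists_coe_le_of_forall_ne_bot fun t : _ × _ × _ =>
    hμ.2 (b.repr (b t.1 * b t.2.1) t.2.2)
  have hmonomial := le_repr_map_monomial b (fun i j l => hb (i, j, l)) hμ π hone
    fun j i => hX (j, i)
  refine ⟨c₀ + e, f + m₀, by linarith, by linarith, fun a P hP hPa => ?_⟩
  have ha := le_of_le_repr_algebraMap b hμ hu hu₀ fun i =>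
    hPa ▸ inf_coeff_add_le_repr b hμ π hmonomial P i
  obtain ⟨k, hk, hinf⟩ := Finset.exists_mem_eq_inf P.support (support_nonempty.2 hP)
    fun k => μ (P.coeff k) + ((e + k.degree * (f + m₀) : ℝ) : EReal)
  refine ⟨k, hk, le_of_eq_of_le ?_ ha⟩
  rw [hinf, add_left_comm, ← EReal.coe_add, add_assoc]

/-- Interpolating between `x ≤ 0` and `x ≤ w - V - n K` with weight `δ / (δ - K)` makes the
`n`-dependence cancel against the penalty `δ n`. -/
theorem sub_le_div_mul_of_add_mul_le {x w V K δ n t : ℝ} (hδ : 0 < δ) (hK : K ≤ 0)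
    (hn : 0 ≤ n) (hx : x ≤ 0) (hxw : x + (V + n * K) ≤ w) (ht : δ * n ≤ t) :
    x - t ≤ δ / (δ - K) * (w - V) := by
  have hδK : 0 < δ - K := by linarith
  rw [div_mul_eq_mul_div, le_div_iff₀ hδK]
  nlinarith [mul_nonneg_of_nonpos_of_nonpos hx hK, mul_le_mul_of_nonneg_left hxw hδ.le,
    mul_le_mul_of_nonneg_left ht hδK.le, mul_nonneg (mul_nonneg hδ.le hδ.le) hn]

theorem le_weightedDegPV_C {R : Type*} [CommRing R] {μ : R → EReal} (hμ : μ 0 = ⊤) {m : ℕ}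
    (d : Fin m → ℝ) (a : R) : μ a ≤ weightedDegPV μ d (C a) := by
  refine le_iInf fun k => ?_
  rw [coeff_C]
  split_ifs with h
  · simp [← h]
  · simp [hμ]

namespace IsAdmissiblePV

variable {R A : Type*} [CommRing R] [CommRing A] [Algebra R A] {μ : R → EReal} {τ : A → EReal}

theorem le_algebraMap (hμ : IsPseudovaluation μ) (hτ : IsAdmissiblePV μ τ) (a : R) :
    μ a ≤ τ (algebraMap R A a) := by
  obtain ⟨m, π, d, -, -, hτ⟩ := hτ
  rw [hτ]
  exact le_iSup₂_of_le (C a) (π.commutes a) (le_weightedDegPV_C hμ.map_zero d a)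

theorem exists_algebraMap_le [Nontrivial A] [Module.Finite R A] [Module.Free R A]
    (hμ : IsNegativePV μ) (hτ : IsAdmissiblePV μ τ) :
    ∃ C G : ℝ, 0 < C ∧ 0 ≤ G ∧ ∀ a : R, τ (algebraMap R A a) ≤ C * μ a + G := by
  obtain ⟨m, π, d, -, hd, hτ⟩ := hτ
  obtain ⟨V, K, hV, hK, hcoeff⟩ := exists_coeff_add_le_of_eq_algebraMap hμ.isProperPV π
  obtain ⟨δ, hδ, hδd⟩ : ∃ δ : ℝ, 0 < δ ∧ ∀ j, δ ≤ d j := by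
    cases isEmpty_or_nonempty (Fin m)
    · exact ⟨1, one_pos, isEmptyElim⟩
    · obtain ⟨j₀, hj₀⟩ := Finite.exists_min d
      exact ⟨d j₀, hd j₀, hj₀⟩
  have hC : 0 < δ / (δ - K) := div_pos hδ (by linarith)
  refine ⟨δ / (δ - K), -(δ / (δ - K) * V), hC, by nlinarith, fun a => ?_⟩
  rcases eq_or_ne a 0 with rfl | ha
  · rw [hμ.1.map_zero, EReal.mul_top_of_pos (EReal.coe_pos.2 hC), EReal.top_add_coe]
    exact le_top
  obtain ⟨w, hw, -⟩ := hμ.exists_eq_coe ha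
  rw [hτ, hw]
  refine iSup₂_le fun P hPa => ?_
  have hP : P ≠ 0 := by
    rintro rfl
    exact ha (FaithfulSMul.algebraMap_injective R A (by rw [← hPa, map_zero, map_zero]))
  obtain ⟨k, hk, hk_le⟩ := hcoeff a P hP hPa
  obtain ⟨x, hx, hx0⟩ := hμ.exists_eq_coe (mem_support_iff.1 hk)
  rw [hx, hw, ← EReal.coe_add, EReal.coe_le_coe_iff] at hk_le
  have hdeg : δ * k.degree ≤ ∑ j, (k j : ℝ) * d j := by
    rw [Finsupp.degree_eq_sum, Nat.cast_sum, Finset.mul_sum]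
    exact Finset.sum_le_sum fun j _ => by
      rw [mul_comm]; exact mul_le_mul_of_nonneg_left (hδd j) (Nat.cast_nonneg _)
  calc weightedDegPV μ d P ≤ μ (P.coeff k) - ((∑ j, (k j : ℝ) * d j : ℝ) : EReal) :=
        iInf_le _ k
    _ ≤ _ := by
      rw [hx, ← EReal.coe_sub, ← EReal.coe_mul, ← EReal.coe_add, EReal.coe_le_coe_iff]
      exact (sub_le_div_mul_of_add_mul_le hδ hK (Nat.cast_nonneg _) hx0 hk_le hdeg).trans_eq
        (by ring)

end IsAdmissiblePV

section WittVector

variable {p : ℕ} {R S : Type*} [CommRing R] [CommRing S]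

theorem gaussNorm_ne_bot_iff {ν : R → EReal} {ε : ℝ} {α : WittVector p R} :
    gaussNorm p ν ε α ≠ ⊥ ↔
      ∃ B : ℝ, ∀ i : ℕ,
        (B : EReal) ≤ i + ((ε * (p : ℝ) ^ (-(i : ℤ)) : ℝ) : EReal) * ν (α.coeff i) := by
  rw [← bot_lt_iff_ne_bot]
  constructor
  · intro h
    obtain ⟨B, -, hB⟩ := EReal.exists_between_coe_real h
    exact ⟨B, fun i => hB.le.trans (iInf_le _ i)⟩
  · rintro ⟨B, hB⟩
    exact (EReal.bot_lt_coe B).trans_le (le_iInf hB)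

variable [Fact p.Prime] {ν : R → EReal} {ν' : S → EReal} {φ : R →+* S} {α : WittVector p R}

theorem IsOverconvergent.map_of_le (hφ : ∀ a, ν a ≤ ν' (φ a))
    (h : IsOverconvergent p ν α) : IsOverconvergent p ν' (WittVector.map φ α) := by
  obtain ⟨ε, hε, hα⟩ := h
  obtain ⟨B, hB⟩ := gaussNorm_ne_bot_iff.1 hα
  refine ⟨ε, hε, gaussNorm_ne_bot_iff.2 ⟨B, fun i => (hB i).trans ?_⟩⟩
  rw [WittVector.map_coeff]
  gcongr
  exact hφ _

theorem IsOverconvergent.of_map_le {C G : ℝ} (hC : 0 < C) (hG : 0 ≤ G)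
    (hφ : ∀ a, ν' (φ a) ≤ C * ν a + G) (h : IsOverconvergent p ν' (WittVector.map φ α)) :
    IsOverconvergent p ν α := by
  obtain ⟨ε, hε, hα⟩ := h
  obtain ⟨B, hB⟩ := gaussNorm_ne_bot_iff.1 hα
  refine ⟨ε * C, mul_pos hε hC, gaussNorm_ne_bot_iff.2 ⟨B - ε * G, fun i => ?_⟩⟩
  set q : ℝ := (p : ℝ) ^ (-(i : ℤ))
  have hq1 : q ≤ 1 := zpow_le_one_of_nonpos₀ (Nat.one_le_cast.2 (Fact.out : p.Prime).one_le)
    (neg_nonpos.2 (Nat.cast_nonneg _))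
  rw [EReal.coe_sub]
  refine EReal.sub_le_of_le_add ((hB i).trans ?_)
  rw [WittVector.map_coeff]
  calc (i : EReal) + ((ε * q : ℝ) : EReal) * ν' (φ (α.coeff i))
      ≤ i + ((ε * q : ℝ) : EReal) * (C * ν (α.coeff i) + G) := by
        gcongr
        exact hφ _
    _ = i + (((ε * C * q : ℝ) : EReal) * ν (α.coeff i) + ((ε * q * G : ℝ) : EReal)) := by
        rw [EReal.left_distrib_of_nonneg_of_ne_top (EReal.coe_nonneg.2 (by positivity))
          (EReal.coe_ne_top _), ← mul_assoc, ← EReal.coe_mul, ← EReal.coe_mul]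
        ring_nf
    _ ≤ i + ((ε * C * q : ℝ) : EReal) * ν (α.coeff i) + ((ε * G : ℝ) : EReal) := by
        rw [add_assoc]
        gcongr
        exact mul_le_of_le_one_right hε.le hq1

end WittVector

theorem statement12_general (p : ℕ) [Fact p.Prime] (R A : Type*)
    [CommRing R] [CommRing A] [Nontrivial A] [Algebra R A]
    (μ : R → EReal) (hμ : IsNegativePV μ)
    [Module.Finite R A] [Module.Free R A]
    (τ : A → EReal) (hτ : IsAdmissiblePV μ τ) :
    ∀ r : WittVector p R, IsOverconvergent p μ r ↔
      IsOverconvergent p τ (WittVector.map (algebraMap R A) r) := by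
  obtain ⟨C, G, hC, hG, hτμ⟩ := hτ.exists_algebraMap_le hμ
  exact fun r => ⟨IsOverconvergent.map_of_le (hτ.le_algebraMap hμ.1),
    IsOverconvergent.of_map_le hC hG hτμ⟩

/-- Let `(R, μ)` be a nonzero ring with `pR = 0` and a negative
pseudovaluation, `A` a nonzero `R`-algebra free of finite rank as an `R`-module, and
`τ` an admissible pseudovaluation on `A`.  A Witt vector over `R` is overconvergent iff
its image in `W(A)` is overconvergent. -/
theorem statement12 (p : ℕ) [Fact p.Prime] (R A : Type*)
    [CommRing R] [Nontrivial R] [CommRing A] [Nontrivial A] [Algebra R A]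
    (hpR : ((p : ℕ) : R) = 0)
    (μ : R → EReal) (hμ : IsNegativePV μ)
    [Module.Finite R A] [Module.Free R A]
    (τ : A → EReal) (hτ : IsAdmissiblePV μ τ) :
    ∀ r : WittVector p R, IsOverconvergent p μ r ↔
      IsOverconvergent p τ (WittVector.map (algebraMap R A) r) :=
  statement12_general p R A μ hμ τ hτ
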